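/- Let L be a finite lattice, Δ a positive integer, and N' a set of multisets of cardinality Δ over L such that: (i) for all M, M' ∈ N', if Multiset.Rel (· ≤ ·) M M' holds then M = M'; and (ii) every combination (with respect to any permutation and index) of two members of N' is dominated by some member of N'. For ℓ ∈ L let ↓ℓ denote the finite set {x ∈ L : x ≤ ℓ}, let Ñ = { M.map (fun ℓ => ↓ℓ) : M ∈ N' }, and let E_N be the set of multisets M of cardinality Δ over L such that Multiset.Rel (· ∈ ·) M S holds for some S ∈ Ñ. Then Ñ is exactly the set of multisets of cardinality Δ of nonempty finite subsets of L that satisfy the universal quantifier w.r.t. E_N and are not strictly dominated (w.r.t. ⊆-domination) by any multiset of cardinality Δ of nonempty finite subsets of L satisfying the universal quantifier w.r.t. E_N. (The node constraint produced by the FixedPoint procedure is invariant under the node-side round elimination step; this is the key content of the fixed-point property re(Π') = Π'' and rere(Π'') = Π'.) -/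

import Mathlib

namespace RoundElim

/-- The configuration (multiset of cardinality `k`) associated to a function `Fin k → α`. -/
def ofFn {α : Type*} {k : ℕ} (f : Fin k → α) : Multiset α :=
  (List.ofFn f : List α)

/-- The combination of the representatives `a`, `b` with respect to the permutation `φ`
and the index `u`: supremum at position `u`, infimum everywhere else. -/
def combineL {L : Type*} [Lattice L] {k : ℕ} (a b : Fin k → L)
    (φ : Equiv.Perm (Fin k)) (u : Fin k) : Fin k → L :=
  fun i => if i = u then a i ⊔ b (φ i) else a i ⊓ b (φ i)

/-- `↓ℓ`: the finite set of elements below `ℓ`. -/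
def downSet {L : Type*} [Preorder L] [Fintype L]
    [DecidableRel ((· ≤ ·) : L → L → Prop)] (ℓ : L) : Finset L :=
  Finset.univ.filter (fun x => x ≤ ℓ)

/-- A set-configuration `C` satisfies the universal quantifier w.r.t. `E`. -/
def SatUQ {α : Type*} (E : Set (Multiset α)) (C : Multiset (Finset α)) : Prop :=
  ∀ M : Multiset α, Multiset.Rel (· ∈ ·) M C → M ∈ E

/-! ### Auxiliary lemmas -/

lemma ofFn_zero {α : Type*} (f : Fin 0 → α) : ofFn f = 0 := by simp [ofFn]

lemma ofFn_succ {α : Type*} {k : ℕ} (f : Fin (k + 1) → α) :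
    ofFn f = f 0 ::ₘ ofFn (f ∘ Fin.succ) := by
  simp [ofFn, List.ofFn_succ]
  rfl

lemma exists_ofFn {α : Type*} {Δ : ℕ} (M : Multiset α) (h : Multiset.card M = Δ) :
    ∃ f : Fin Δ → α, ofFn f = M := by
  induction M using Quotient.inductionOn with
  | h l =>
    simp only [Multiset.quot_mk_to_coe, Multiset.coe_card] at h
    subst h
    exact ⟨l.get, by simp [ofFn, List.ofFn_get]⟩

lemma mem_ofFn' {α : Type*} {k : ℕ} (f : Fin k → α) (i : Fin k) : f i ∈ ofFn f := by
  simp only [ofFn, Multiset.mem_coe, List.mem_ofFn]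
  exact ⟨i, rfl⟩

lemma rel_ofFn_of_forall {α β : Type*} {r : α → β → Prop} :
    ∀ {k : ℕ} (f : Fin k → α) (g : Fin k → β),
      (∀ i, r (f i) (g i)) → Multiset.Rel r (ofFn f) (ofFn g)
  | 0, f, g, _ => by simp [ofFn_zero]
  | k + 1, f, g, h => by
    rw [ofFn_succ f, ofFn_succ g]
    exact Multiset.Rel.cons (h 0) (rel_ofFn_of_forall _ _ fun i => h i.succ)

lemma rel_ofFn_left {α β : Type*} {r : α → β → Prop} :
    ∀ {k : ℕ} (f : Fin k → α) (t : Multiset β),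
      Multiset.Rel r (ofFn f) t → ∃ g : Fin k → β, t = ofFn g ∧ ∀ i, r (f i) (g i)
  | 0, f, t, h => by
    rw [ofFn_zero, Multiset.rel_zero_left] at h
    exact ⟨Fin.elim0, by simp [h, ofFn_zero], fun i => i.elim0⟩
  | k + 1, f, t, h => by
    rw [ofFn_succ, Multiset.rel_cons_left] at h
    obtain ⟨b, t', hb, hrel, rfl⟩ := h
    obtain ⟨g', rfl, hg'⟩ := rel_ofFn_left _ _ hrel
    refine ⟨Fin.cons b g', ?_, ?_⟩
    · rw [ofFn_succ]
      have h1 : (Fin.cons b g' : Fin (k + 1) → β) 0 = b := rfl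
      have h2 : (Fin.cons b g' : Fin (k + 1) → β) ∘ Fin.succ = g' :=
        funext fun i => Fin.cons_succ _ _ _
      rw [h1, h2]
    · intro i
      induction i using Fin.cases with
      | zero => simpa using hb
      | succ j => simpa using hg' j

lemma rel_le_antisymm_aux {α : Type*} [PartialOrder α] [DecidableEq α]
    {M N : Multiset α} {m : α}
    (hmax : ∀ x ∈ M + N, m ≤ x → x = m) (hm : m ∈ M)
    (h : Multiset.Rel (· ≤ ·) M N) :
    m ∈ N ∧ Multiset.Rel (· ≤ ·) (M.erase m) (N.erase m) := by
  rw [← Multiset.cons_erase hm, Multiset.rel_cons_left] at h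
  obtain ⟨b, N₀, hmb, hrel, rfl⟩ := h
  have hb : b = m := hmax b (by simp) hmb
  subst hb
  exact ⟨Multiset.mem_cons_self _ _, by rwa [Multiset.erase_cons_head]⟩

/-- Antisymmetry for mutual `≤`-domination of multisets over a partial order. -/
lemma rel_le_antisymm {α : Type*} [PartialOrder α] [DecidableEq α] :
    ∀ (n : ℕ) (M N : Multiset α), Multiset.card M = n →
      Multiset.Rel (· ≤ ·) M N → Multiset.Rel (· ≤ ·) N M → M = N := by
  intro n
  induction n with
  | zero =>
    intro M N hc h1 _
    rw [Multiset.card_eq_zero] at hc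
    subst hc
    rw [Multiset.rel_zero_left] at h1
    rw [h1]
  | succ n ih =>
    intro M N hc h1 h2
    have hMne : M ≠ 0 := by
      intro h; subst h; simp at hc
    have hne : ((M + N).toFinset : Set α).Nonempty := by
      obtain ⟨a, ha⟩ := Multiset.exists_mem_of_ne_zero hMne
      exact ⟨a, by simp [Multiset.mem_toFinset, Multiset.mem_add]; exact Or.inl ha⟩
    obtain ⟨m, hm, hmaxwrt⟩ :=
      Set.Finite.exists_maximalFor id _ ((M + N).toFinset.finite_toSet) hne
    have hmax : ∀ x ∈ M + N, m ≤ x → x = m := by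
      intro x hx hmx
      exact le_antisymm (hmaxwrt (by simpa [Multiset.mem_toFinset] using hx) hmx) hmx
    have hm' : m ∈ M + N := by simpa [Multiset.mem_toFinset] using hm
    have hmax' : ∀ x ∈ N + M, m ≤ x → x = m := by
      intro x hx
      exact hmax x (by rwa [add_comm])
    rw [Multiset.mem_add] at hm'
    have key : m ∈ M ∧ m ∈ N := by
      rcases hm' with h | h
      · exact ⟨h, (rel_le_antisymm_aux hmax h h1).1⟩
      · exact ⟨(rel_le_antisymm_aux hmax' h h2).1, h⟩
    obtain ⟨hmM, hmN⟩ := key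
    have e1 := (rel_le_antisymm_aux hmax hmM h1).2
    have e2 := (rel_le_antisymm_aux hmax' hmN h2).2
    have hcerase : Multiset.card (M.erase m) = n := by
      rw [Multiset.card_erase_of_mem hmM, hc]; rfl
    have := ih (M.erase m) (N.erase m) hcerase e1 e2
    rw [← Multiset.cons_erase hmM, ← Multiset.cons_erase hmN, this]

lemma mem_downSet {L : Type*} [Preorder L] [Fintype L]
    [DecidableRel ((· ≤ ·) : L → L → Prop)] {x ℓ : L} : x ∈ downSet ℓ ↔ x ≤ ℓ := by
  simp [downSet]

lemma map_downSet_ofFn {L : Type*} [Preorder L] [Fintype L]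
    [DecidableRel ((· ≤ ·) : L → L → Prop)] {k : ℕ} (a : Fin k → L) :
    (ofFn a).map downSet = ofFn (fun i => downSet (a i)) := by
  simp only [ofFn, Multiset.map_coe, List.map_ofFn]
  rfl

/-- Lemma A: every nonempty set-configuration all of whose selections are dominated by
members of `N'` is `⊆`-dominated by the down-set configuration of some member of `N'`. -/
lemma lemmaA {L : Type*} [Lattice L] [Fintype L] [DecidableEq L]
    [DecidableRel ((· ≤ ·) : L → L → Prop)]
    {Δ : ℕ} (N' : Set (Multiset L))
    (hcomb : ∀ a b : Fin Δ → L, ofFn a ∈ N' → ofFn b ∈ N' →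
      ∀ (φ : Equiv.Perm (Fin Δ)) (u : Fin Δ),
        ∃ M ∈ N', Multiset.Rel (· ≤ ·) (ofFn (combineL a b φ u)) M)
    (g : Fin Δ → Finset L) (hne : ∀ i, (g i).Nonempty)
    (hsat : ∀ f : Fin Δ → L, (∀ i, f i ∈ g i) →
      ∃ M ∈ N', Multiset.Rel (· ≤ ·) (ofFn f) M) :
    ∃ M ∈ N', Multiset.Rel (· ⊆ ·) (ofFn g) (M.map downSet) := by
  set P : (Fin Δ → L) → Prop :=
    fun f => ∃ M ∈ N', Multiset.Rel (· ≤ ·) (ofFn f) M with hP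
  have hclos : ∀ (f f' : Fin Δ → L) (u : Fin Δ), P f → P f' →
      P (fun i => if i = u then f i ⊔ f' i else f i ⊓ f' i) := by
    intro f f' u ⟨M1, hM1, hr1⟩ ⟨M2, hM2, hr2⟩
    obtain ⟨a, rfl, ha⟩ := rel_ofFn_left f M1 hr1
    obtain ⟨b, rfl, hb⟩ := rel_ofFn_left f' M2 hr2
    obtain ⟨M, hM, hrc⟩ := hcomb a b hM1 hM2 1 u
    obtain ⟨c, rfl, hc⟩ := rel_ofFn_left _ _ hrc
    refine ⟨ofFn c, hM, rel_ofFn_of_forall _ _ fun i => ?_⟩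
    have := hc i
    simp only [combineL, Equiv.Perm.one_apply] at this
    by_cases h : i = u <;> simp only [h, if_true, if_false] at this ⊢
    · exact le_trans (sup_le_sup (ha u) (hb u)) this
    · exact le_trans (inf_le_inf (ha i) (hb i)) this
  have key : ∀ k : ℕ, ∀ f : Fin Δ → L,
      (∀ i : Fin Δ, (i : ℕ) < k → f i = (g i).sup' (hne i) id) →
      (∀ i : Fin Δ, k ≤ (i : ℕ) → f i ∈ g i) → P f := by
    intro k
    induction k with
    | zero => intro f _ h2; exact hsat f fun i => h2 i (Nat.zero_le _)
    | succ k ih =>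
      intro f h1 h2
      by_cases hk : k < Δ
      · set u : Fin Δ := ⟨k, hk⟩ with hu
        have hfu : f u = (g u).sup' (hne u) id := h1 u (Nat.lt_succ_self k)
        have hupd : P (Function.update f u ((g u).sup' (hne u) id)) := by
          refine Finset.sup'_induction (p := fun x => P (Function.update f u x))
            (hne u) id ?_ ?_
          · intro a₁ hp1 a₂ hp2
            have := hclos _ _ u hp1 hp2
            have heq : (fun i => if i = u then Function.update f u a₁ i ⊔
                Function.update f u a₂ i else Function.update f u a₁ i ⊓
                Function.update f u a₂ i) = Function.update f u (a₁ ⊔ a₂) := by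
              funext i
              by_cases h : i = u
              · subst h; simp
              · simp [h, Function.update_of_ne h]
            rwa [heq] at this
          · intro b hb
            apply ih
            · intro i hi
              have hiu : i ≠ u := by
                intro h; subst h; exact absurd hi (by simp [hu])
              rw [Function.update_of_ne hiu]
              exact h1 i (Nat.lt_succ_of_lt hi)
            · intro i hi
              by_cases h : i = u
              · subst h; simpa using hb
              · rw [Function.update_of_ne h]
                apply h2
                rcases Nat.lt_or_ge (i : ℕ) (k + 1) with h' | h'
                · exfalso
                  have : (i : ℕ) = k := Nat.le_antisymm (Nat.lt_succ_iff.mp h') hi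
                  exact h (Fin.ext this)
                · exact h'
        rwa [← hfu, Function.update_eq_self] at hupd
      · apply ih
        · intro i hi; exact h1 i (Nat.lt_succ_of_lt hi)
        · intro i hi
          exact absurd (lt_of_le_of_lt hi i.isLt) hk
  have hG : P (fun i => (g i).sup' (hne i) id) :=
    key Δ _ (fun _ _ => rfl) (fun i hi => absurd i.isLt (not_lt.2 hi))
  obtain ⟨M, hM, hrel⟩ := hG
  obtain ⟨a, rfl, ha⟩ := rel_ofFn_left _ _ hrel
  refine ⟨ofFn a, hM, ?_⟩
  rw [map_downSet_ofFn]
  refine rel_ofFn_of_forall _ _ fun i => fun x hx => ?_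
  rw [mem_downSet]
  exact le_trans (Finset.le_sup' id hx) (ha i)

/-- The node constraint produced by the `FixedPoint` procedure is invariant under the
node-side round elimination step: `Ñ = { M.map (↓·) : M ∈ N' }` is exactly the set of
maximal set-configurations (with nonempty sets) satisfying the universal quantifier w.r.t.
the constraint `E_N` of choices from `Ñ`. -/
theorem fixedPoint_node_invariant {L : Type*} [Lattice L] [Fintype L] [DecidableEq L]
    [DecidableRel ((· ≤ ·) : L → L → Prop)]
    (Δ : ℕ) (hΔ : 0 < Δ)
    (N' : Set (Multiset L))
    (hcard : ∀ M ∈ N', Multiset.card M = Δ)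
    (hanti : ∀ M ∈ N', ∀ M' ∈ N', Multiset.Rel (· ≤ ·) M M' → M = M')
    (hcomb : ∀ a b : Fin Δ → L, ofFn a ∈ N' → ofFn b ∈ N' →
      ∀ (φ : Equiv.Perm (Fin Δ)) (u : Fin Δ),
        ∃ M ∈ N', Multiset.Rel (· ≤ ·) (ofFn (combineL a b φ u)) M) :
    {S : Multiset (Finset L) | ∃ M ∈ N', S = M.map (fun ℓ => downSet ℓ)} =
      {S : Multiset (Finset L) |
        Multiset.card S = Δ ∧ (∀ s ∈ S, s.Nonempty) ∧
        SatUQ {M : Multiset L | ∃ S' : Multiset (Finset L),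
          (∃ M' ∈ N', S' = M'.map (fun ℓ => downSet ℓ)) ∧ Multiset.Rel (· ∈ ·) M S'} S ∧
        ¬ ∃ S' : Multiset (Finset L),
          Multiset.card S' = Δ ∧ (∀ s ∈ S', s.Nonempty) ∧
          SatUQ {M : Multiset L | ∃ S'' : Multiset (Finset L),
            (∃ M' ∈ N', S'' = M'.map (fun ℓ => downSet ℓ)) ∧ Multiset.Rel (· ∈ ·) M S''} S' ∧
          Multiset.Rel (· ⊆ ·) S S' ∧ ¬ Multiset.Rel (· ⊆ ·) S' S} := by
  -- Conversions between down-set relations and order relations.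
  have hrelmem : ∀ (M M' : Multiset L),
      Multiset.Rel (· ∈ ·) M (M'.map (fun ℓ => downSet ℓ)) ↔
        Multiset.Rel (· ≤ ·) M M' := by
    intro M M'
    rw [Multiset.rel_map_right]
    constructor
    · intro h; exact h.mono fun a _ b _ hab => mem_downSet.mp hab
    · intro h; exact h.mono fun a _ b _ hab => mem_downSet.mpr hab
  have hrelsub : ∀ (M M₂ : Multiset L),
      Multiset.Rel (· ⊆ ·) (M.map (fun ℓ => downSet ℓ)) (M₂.map (fun ℓ => downSet ℓ)) ↔
        Multiset.Rel (· ≤ ·) M M₂ := by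
    intro M M₂
    rw [Multiset.rel_map]
    constructor
    · intro h
      exact h.mono fun a _ b _ hab => mem_downSet.mp (hab (mem_downSet.mpr le_rfl))
    · intro h
      exact h.mono fun a _ b _ hab x hx =>
        mem_downSet.mpr (le_trans (mem_downSet.mp hx) hab)
  have htrans : ∀ (A B C : Multiset (Finset L)), Multiset.card A = Δ →
      Multiset.Rel (· ⊆ ·) A B → Multiset.Rel (· ⊆ ·) B C →
        Multiset.Rel (· ⊆ ·) A C := by
    intro A B C hA h1 h2
    obtain ⟨f, rfl⟩ := exists_ofFn A hA
    obtain ⟨g, rfl, hg⟩ := rel_ofFn_left f B h1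
    obtain ⟨h, rfl, hh⟩ := rel_ofFn_left g C h2
    exact rel_ofFn_of_forall _ _ fun i => (hg i).trans (hh i)
  ext S
  simp only [Set.mem_setOf_eq]
  constructor
  · rintro ⟨M, hM, rfl⟩
    refine ⟨by simp [hcard M hM], ?_, ?_, ?_⟩
    · intro s hs
      rw [Multiset.mem_map] at hs
      obtain ⟨ℓ, _, rfl⟩ := hs
      exact ⟨ℓ, mem_downSet.mpr le_rfl⟩
    · intro M₀ h
      exact ⟨M.map (fun ℓ => downSet ℓ), ⟨M, hM, rfl⟩, h⟩
    · rintro ⟨S', hc', hn', hs', hdom, hndom⟩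
      obtain ⟨g, hgeq⟩ := exists_ofFn S' hc'
      have hne : ∀ i, (g i).Nonempty := fun i => hn' (g i) (hgeq ▸ mem_ofFn' g i)
      have hsat : ∀ f : Fin Δ → L, (∀ i, f i ∈ g i) →
          ∃ M₁ ∈ N', Multiset.Rel (· ≤ ·) (ofFn f) M₁ := by
        intro f hf
        have hmemrel : Multiset.Rel (· ∈ ·) (ofFn f) S' := by
          rw [← hgeq]; exact rel_ofFn_of_forall _ _ hf
        obtain ⟨S'', ⟨M', hM', rfl⟩, hrel⟩ := hs' (ofFn f) hmemrel
        exact ⟨M', hM', (hrelmem _ _).mp hrel⟩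
      obtain ⟨M₂, hM₂, hrel2⟩ := lemmaA N' hcomb g hne hsat
      have hrel2' : Multiset.Rel (· ⊆ ·) S' (M₂.map (fun ℓ => downSet ℓ)) := by
        rw [← hgeq]; exact hrel2
      have hcardS : Multiset.card (M.map (fun ℓ => downSet ℓ)) = Δ := by
        simp [hcard M hM]
      have hMM₂ : Multiset.Rel (· ≤ ·) M M₂ :=
        (hrelsub _ _).mp (htrans _ _ _ hcardS hdom hrel2')
      have : M = M₂ := hanti M hM M₂ hM₂ hMM₂
      subst this
      exact hndom hrel2'
  · rintro ⟨hc, hn, hs, hmax⟩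
    obtain ⟨g, hgeq⟩ := exists_ofFn S hc
    have hne : ∀ i, (g i).Nonempty := fun i => hn (g i) (hgeq ▸ mem_ofFn' g i)
    have hsat : ∀ f : Fin Δ → L, (∀ i, f i ∈ g i) →
        ∃ M₁ ∈ N', Multiset.Rel (· ≤ ·) (ofFn f) M₁ := by
      intro f hf
      have hmemrel : Multiset.Rel (· ∈ ·) (ofFn f) S := by
        rw [← hgeq]; exact rel_ofFn_of_forall _ _ hf
      obtain ⟨S'', ⟨M', hM', rfl⟩, hrel⟩ := hs (ofFn f) hmemrel
      exact ⟨M', hM', (hrelmem _ _).mp hrel⟩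
    obtain ⟨M, hM, hrel⟩ := lemmaA N' hcomb g hne hsat
    have hrel' : Multiset.Rel (· ⊆ ·) S (M.map (fun ℓ => downSet ℓ)) := by
      rw [← hgeq]; exact hrel
    have hcardT : Multiset.card (M.map (fun ℓ => downSet ℓ)) = Δ := by
      simp [hcard M hM]
    have hneT : ∀ s ∈ M.map (fun ℓ => downSet ℓ), s.Nonempty := by
      intro s hs'
      rw [Multiset.mem_map] at hs'
      obtain ⟨ℓ, _, rfl⟩ := hs'
      exact ⟨ℓ, mem_downSet.mpr le_rfl⟩
    have hsatT : SatUQ {M₀ : Multiset L | ∃ S'' : Multiset (Finset L),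
        (∃ M' ∈ N', S'' = M'.map (fun ℓ => downSet ℓ)) ∧ Multiset.Rel (· ∈ ·) M₀ S''}
        (M.map (fun ℓ => downSet ℓ)) := by
      intro M₀ h
      exact ⟨M.map (fun ℓ => downSet ℓ), ⟨M, hM, rfl⟩, h⟩
    have hback : Multiset.Rel (· ⊆ ·) (M.map (fun ℓ => downSet ℓ)) S := by
      by_contra h
      exact hmax ⟨M.map (fun ℓ => downSet ℓ), hcardT, hneT, hsatT, hrel', h⟩
    have hsub_eq : ((· ⊆ ·) : Finset L → Finset L → Prop) = (· ≤ ·) := by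
      funext a b
      exact propext ⟨fun h => h, fun h => h⟩
    rw [hsub_eq] at hrel' hback
    exact ⟨M, hM, rel_le_antisymm Δ S _ hc hrel' hback⟩

end RoundElim
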